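/- Let Y be an integrable real random variable and Z a standard Gaussian random variable. Then sup_{z∈ℝ} |P(Y ≤ z) − P(Z ≤ z)| ≤ sup_{f ∈ F_Kol} |E[f'(Y) − Y f(Y)]|, where F_Kol is the class of all piecewise continuously differentiable functions f : ℝ → ℝ that are bounded by √(2π)/4 and whose derivative is bounded by 1. -/

import Mathlib

open MeasureTheory ProbabilityTheory Real Set

/-- `f` is continuous and piecewise continuously differentiable, with derivative `f'`
(outside a finite exceptional set). -/
def PiecewiseC1 (f f' : ℝ → ℝ) : Prop :=
  Continuous f ∧ ∃ S : Finset ℝ,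
    (∀ x ∉ S, HasDerivAt f (f' x) x) ∧ ContinuousOn f' ((S : Set ℝ)ᶜ)

/-!
Stein's method. For each `z`, Stein's equation `f' x - x * f x = 𝟙{x ≤ z} - Φ z` has the
solution `f_z x = Φ (min x z) * (1 - Φ (max x z)) / φ x`, and then
`E[f_z'(Y) - Y f_z(Y)] = P(Y ≤ z) - Φ z`. It remains to check that `f_z` lies in the class.
The bound `|f_z| ≤ √(2π)/4` reduces to `Φ x (1 - Φ x) ≤ √(2π)/4 · φ x`: the derivative of the
difference is `φ` times a function that is concave on `[0, ∞)` and vanishes at `0`, so the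
difference first increases and then decreases to its limit `0`. The bound `|f_z'| ≤ 1` follows
from the Mills ratio inequality `x (1 - Φ x) ≤ φ x` for `x ≥ 0`.
-/

open Filter Topology

local notation "Φ" => cdf (gaussianReal 0 1)
local notation "φ" => gaussianPDFReal 0 1

lemma AntitoneOn.le_of_tendsto_atTop {f : ℝ → ℝ} {a l : ℝ} (hf : AntitoneOn f (Ici a))
    (hl : Tendsto f atTop (𝓝 l)) : l ≤ f a :=
  le_of_tendsto hl (eventually_atTop.2 ⟨a, fun _ hy => hf self_mem_Ici hy hy⟩)

lemma ConcaveOn.nonneg_on_Icc_or_nonpos_on_Ici {ψ : ℝ → ℝ} {a x : ℝ}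
    (hψ : ConcaveOn ℝ (Ici a) ψ) (ha : 0 ≤ ψ a) (hx : a ≤ x) :
    (∀ t ∈ Icc a x, 0 ≤ ψ t) ∨ ∀ t ∈ Ici x, ψ t ≤ 0 := by
  by_cases hψx : 0 ≤ ψ x
  · exact .inl fun t ht => (le_min ha hψx).trans (hψ.min_le_of_mem_Icc self_mem_Ici hx ht)
  · refine .inr fun t ht => ?_
    by_contra! hψt
    exact hψx <| (le_min ha hψt.le).trans
      (hψ.min_le_of_mem_Icc self_mem_Ici (hx.trans ht) ⟨hx, ht⟩)

lemma nonneg_of_hasDerivAt_mul_concaveOn {g w ψ : ℝ → ℝ} {a x : ℝ}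
    (hg : ∀ t, HasDerivAt g (w t * ψ t) t) (hw : ∀ t, 0 ≤ w t)
    (hψ : ConcaveOn ℝ (Ici a) ψ) (hψa : 0 ≤ ψ a) (hga : 0 ≤ g a)
    (hlim : Tendsto g atTop (𝓝 0)) (hx : a ≤ x) : 0 ≤ g x := by
  have hcont : ∀ s : Set ℝ, ContinuousOn g s := fun s t _ =>
    (hg t).continuousAt.continuousWithinAt
  rcases hψ.nonneg_on_Icc_or_nonpos_on_Ici hψa hx with hpos | hneg
  · have hmono : MonotoneOn g (Icc a x) :=
      monotoneOn_of_hasDerivWithinAt_nonneg (convex_Icc a x) (hcont _)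
        (fun t _ => (hg t).hasDerivWithinAt)
        (fun t ht => mul_nonneg (hw t) (hpos t (interior_subset ht)))
    exact hga.trans (hmono (left_mem_Icc.2 hx) (right_mem_Icc.2 hx) hx)
  · have hanti : AntitoneOn g (Ici x) :=
      antitoneOn_of_hasDerivWithinAt_nonpos (convex_Ici x) (hcont _)
        (fun t _ => (hg t).hasDerivWithinAt)
        (fun t ht => mul_nonpos_of_nonneg_of_nonpos (hw t) (hneg t (interior_subset ht)))
    exact hanti.le_of_tendsto_atTop hlim

lemma stdPDF_eq (x : ℝ) : φ x = (√(2 * π))⁻¹ * exp (-x ^ 2 / 2) := by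
  simp [gaussianPDFReal]

lemma stdPDF_pos (x : ℝ) : 0 < φ x := gaussianPDFReal_pos 0 1 x one_ne_zero

lemma stdPDF_neg (x : ℝ) : φ (-x) = φ x := by
  simp only [stdPDF_eq, neg_sq]

lemma stdPDF_zero : φ 0 = (√(2 * π))⁻¹ := by
  simp [stdPDF_eq]

lemma hasDerivAt_stdPDF (x : ℝ) : HasDerivAt φ (-x * φ x) x := by
  have hexp : HasDerivAt (fun y : ℝ => -y ^ 2 / 2) (-x) x := by
    refine ((hasDerivAt_pow 2 x).neg.div_const 2).congr_deriv ?_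
    ring
  rw [funext stdPDF_eq]
  refine (hexp.exp.const_mul (√(2 * π))⁻¹).congr_deriv ?_
  ring

lemma continuous_stdPDF : Continuous φ :=
  continuous_iff_continuousAt.2 fun x => (hasDerivAt_stdPDF x).continuousAt

lemma antitoneOn_stdPDF : AntitoneOn φ (Ici 0) := fun x hx y hy hxy => by
  simp only [stdPDF_eq]
  gcongr

lemma tendsto_stdPDF_atTop : Tendsto φ atTop (𝓝 0) := by
  have h : Tendsto (fun x : ℝ => -x ^ 2 / 2) atTop atBot :=
    (tendsto_neg_atBot_iff.2 (tendsto_pow_atTop two_ne_zero)).atBot_div_const two_pos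
  rw [funext stdPDF_eq]
  simpa using (tendsto_exp_atBot.comp h).const_mul (√(2 * π))⁻¹

lemma stdCDF_eq_integral (x : ℝ) : Φ x = ∫ t in Iic x, φ t := by
  rw [cdf_eq_real, measureReal_def, gaussianReal_apply_eq_integral 0 one_ne_zero,
    ENNReal.toReal_ofReal (integral_nonneg fun t => (stdPDF_pos t).le)]

lemma hasDerivAt_stdCDF (x : ℝ) : HasDerivAt Φ (φ x) x := by
  have hint : Integrable φ := integrable_gaussianPDFReal 0 1
  have hΦ : ∀ y, Φ y = Φ 0 + ∫ t in (0 : ℝ)..y, φ t := fun y => by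
    rw [stdCDF_eq_integral, stdCDF_eq_integral,
      ← intervalIntegral.integral_Iic_sub_Iic hint.integrableOn hint.integrableOn]
    ring
  rw [funext hΦ]
  exact (intervalIntegral.integral_hasDerivAt_right hint.intervalIntegrable
    (continuous_stdPDF.stronglyMeasurableAtFilter _ _) continuous_stdPDF.continuousAt).const_add _

lemma continuous_stdCDF : Continuous Φ :=
  continuous_iff_continuousAt.2 fun x => (hasDerivAt_stdCDF x).continuousAt

lemma stdCDF_neg (x : ℝ) : Φ (-x) = 1 - Φ x := by
  have hmap : (gaussianReal 0 1).map (fun x => -x) = gaussianReal 0 1 := by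
    simpa using gaussianReal_map_neg (μ := 0) (v := 1)
  have := nullSingletonClass_gaussianReal (μ := 0) one_ne_zero
  calc Φ (-x) = (gaussianReal 0 1).real (Ici x) := by
        rw [cdf_eq_real, ← hmap, map_measureReal_apply measurable_neg measurableSet_Iic, hmap]
        congr 1; ext t; simp
    _ = 1 - Φ x := by
        rw [← measureReal_congr Ioi_ae_eq_Ici, ← compl_Iic,
          probReal_compl_eq_one_sub measurableSet_Iic, cdf_eq_real]

lemma stdCDF_zero : Φ 0 = 1 / 2 := by
  have h := stdCDF_neg 0
  rw [neg_zero] at h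
  linarith

lemma mul_one_sub_stdCDF_le_stdPDF {x : ℝ} (hx : 0 ≤ x) : x * (1 - Φ x) ≤ φ x := by
  rcases hx.eq_or_lt with rfl | hx
  · simpa using (stdPDF_pos 0).le
  have hg : ∀ t ≠ 0, HasDerivAt (fun t => φ t / t - (1 - Φ t)) (-φ t / t ^ 2) t :=
    fun t ht => by
    refine (((hasDerivAt_stdPDF t).div (hasDerivAt_id' t) ht).sub
      ((hasDerivAt_stdCDF t).const_sub 1)).congr_deriv ?_
    field_simp
    ring
  have hanti : AntitoneOn (fun t => φ t / t - (1 - Φ t)) (Ici x) :=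
    antitoneOn_of_hasDerivWithinAt_nonpos (convex_Ici x)
    (fun t ht => (hg t (hx.trans_le ht).ne').continuousAt.continuousWithinAt)
    (fun t ht => (hg t (hx.trans_le (interior_subset ht)).ne').hasDerivWithinAt)
    (fun t _ => div_nonpos_of_nonpos_of_nonneg (neg_nonpos.2 (stdPDF_pos t).le) (sq_nonneg t))
  have hlim : Tendsto (fun t => φ t / t - (1 - Φ t)) atTop (𝓝 0) := by
    simpa [div_eq_mul_inv] using (tendsto_stdPDF_atTop.mul tendsto_inv_atTop_zero).sub
      ((tendsto_cdf_atTop (gaussianReal 0 1)).const_sub 1)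
  have hgx := hanti.le_of_tendsto_atTop hlim
  rw [sub_nonneg, le_div_iff₀ hx] at hgx
  linarith

lemma neg_mul_stdCDF_le_stdPDF {x : ℝ} (hx : x ≤ 0) : -x * Φ x ≤ φ x := by
  simpa [stdCDF_neg, stdPDF_neg] using mul_one_sub_stdCDF_le_stdPDF (neg_nonneg.2 hx)

lemma stdCDF_mul_one_sub_le (x : ℝ) : Φ x * (1 - Φ x) ≤ √(2 * π) / 4 * φ x := by
  wlog hx : 0 ≤ x generalizing x
  · simpa [stdCDF_neg, stdPDF_neg, mul_comm] using this (-x) (by linarith)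
  set c := √(2 * π) / 4
  have hψ' : ∀ t, HasDerivAt (fun t => 2 * Φ t - 1 - c * t) (2 * φ t - c) t := fun t => by
    refine ((((hasDerivAt_stdCDF t).const_mul 2).sub_const 1).sub
      ((hasDerivAt_id' t).const_mul c)).congr_deriv ?_
    ring
  have hψ : ConcaveOn ℝ (Ici 0) (fun t => 2 * Φ t - 1 - c * t) := by
    refine AntitoneOn.concaveOn_of_deriv (convex_Ici 0)
      (fun t _ => (hψ' t).continuousAt.continuousWithinAt)
      (fun t _ => (hψ' t).differentiableAt.differentiableWithinAt) ?_
    rw [funext fun t => (hψ' t).deriv, interior_Ici]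
    exact fun s hs t ht hst => by
      have := antitoneOn_stdPDF (mem_Ici_of_Ioi hs) (mem_Ici_of_Ioi ht) hst
      simp only
      linarith
  have hg : ∀ t, HasDerivAt (fun t => c * φ t - Φ t * (1 - Φ t))
      (φ t * (2 * Φ t - 1 - c * t)) t := fun t => by
    refine (((hasDerivAt_stdPDF t).const_mul c).sub
      ((hasDerivAt_stdCDF t).mul ((hasDerivAt_stdCDF t).const_sub 1))).congr_deriv ?_
    ring
  have hg0 : c * φ 0 - Φ 0 * (1 - Φ 0) = 0 := by
    have : √(2 * π) ≠ 0 := by positivity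
    rw [stdPDF_zero, stdCDF_zero]
    field_simp
    ring
  have hlim : Tendsto (fun t => c * φ t - Φ t * (1 - Φ t)) atTop (𝓝 0) := by
    have hΦ := tendsto_cdf_atTop (gaussianReal 0 1)
    simpa using (tendsto_stdPDF_atTop.const_mul c).sub (hΦ.mul (hΦ.const_sub 1))
  have := nonneg_of_hasDerivAt_mul_concaveOn hg (fun t => (stdPDF_pos t).le) hψ
    (by simp [stdCDF_zero]) hg0.ge hlim hx
  linarith

lemma one_add_mul_stdCDF_div_nonneg (x : ℝ) : 0 ≤ 1 + x * Φ x / φ x := by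
  have hφ := stdPDF_pos x
  rcases le_total 0 x with hx | hx
  · have := cdf_nonneg (gaussianReal 0 1) x
    positivity
  · have := neg_mul_stdCDF_le_stdPDF hx
    rw [one_add_div hφ.ne']
    exact div_nonneg (by linarith) hφ.le

lemma one_sub_stdCDF_mul_le_one (x : ℝ) : (1 - Φ x) * (1 + x * Φ x / φ x) ≤ 1 := by
  have hφ := stdPDF_pos x
  have hΦ0 := cdf_nonneg (gaussianReal 0 1) x
  have hΦ1 := cdf_le_one (gaussianReal 0 1) x
  rw [one_add_div hφ.ne', mul_div_assoc', div_le_one hφ]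
  rcases le_total 0 x with hx | hx
  · nlinarith [mul_le_mul_of_nonneg_left (mul_one_sub_stdCDF_le_stdPDF hx) hΦ0]
  · nlinarith [mul_nonneg (mul_nonneg (neg_nonneg.2 hx) hΦ0) (sub_nonneg.2 hΦ1)]

/-- The solution of Stein's equation `f' x - x * f x = 𝟙{x ≤ z} - Φ z`. -/
noncomputable def steinSolution (z x : ℝ) : ℝ := Φ (min x z) * (1 - Φ (max x z)) / φ x

noncomputable def steinSolutionDeriv (z x : ℝ) : ℝ :=
  x * steinSolution z x + (Iic z).indicator 1 x - Φ z

lemma steinSolutionDeriv_sub_mul (z x : ℝ) :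
    steinSolutionDeriv z x - x * steinSolution z x = (Iic z).indicator 1 x - Φ z := by
  rw [steinSolutionDeriv]
  ring

lemma hasDerivAt_div_stdPDF {g : ℝ → ℝ} {g' x : ℝ} (hg : HasDerivAt g g' x) :
    HasDerivAt (fun y => g y / φ y) (g' / φ x + x * (g x / φ x)) x := by
  have hφ := (stdPDF_pos x).ne'
  refine (hg.div (hasDerivAt_stdPDF x) hφ).congr_deriv ?_
  field_simp
  ring

lemma hasDerivAt_steinSolution {z x : ℝ} (hx : x ≠ z) :
    HasDerivAt (steinSolution z) (steinSolutionDeriv z x) x := by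
  have hφ := (stdPDF_pos x).ne'
  rcases hx.lt_or_gt with h | h
  · have heq : steinSolution z =ᶠ[𝓝 x] fun y => Φ y * (1 - Φ z) / φ y := by
      filter_upwards [Iio_mem_nhds h] with y hy
      rw [steinSolution, min_eq_left hy.le, max_eq_right hy.le]
    refine ((hasDerivAt_div_stdPDF ((hasDerivAt_stdCDF x).mul_const (1 - Φ z))
      ).congr_of_eventuallyEq heq).congr_deriv ?_
    rw [steinSolutionDeriv, heq.eq_of_nhds, indicator_of_mem (mem_Iic.2 h.le), Pi.one_apply]
    field_simp
    ring
  · have heq : steinSolution z =ᶠ[𝓝 x] fun y => Φ z * (1 - Φ y) / φ y := by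
      filter_upwards [Ioi_mem_nhds h] with y hy
      rw [steinSolution, min_eq_right hy.le, max_eq_left hy.le]
    refine ((hasDerivAt_div_stdPDF (((hasDerivAt_stdCDF x).const_sub 1).const_mul (Φ z))
      ).congr_of_eventuallyEq heq).congr_deriv ?_
    rw [steinSolutionDeriv, heq.eq_of_nhds, indicator_of_notMem (notMem_Iic.2 h)]
    field_simp
    ring

lemma continuous_steinSolution (z : ℝ) : Continuous (steinSolution z) :=
  ((continuous_stdCDF.comp (continuous_id.min continuous_const)).mul
    (continuous_const.sub (continuous_stdCDF.comp (continuous_id.max continuous_const)))).div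
    continuous_stdPDF fun x => (stdPDF_pos x).ne'

lemma piecewiseC1_steinSolution (z : ℝ) :
    PiecewiseC1 (steinSolution z) (steinSolutionDeriv z) := by
  refine ⟨continuous_steinSolution z, {z},
    fun x hx => hasDerivAt_steinSolution (by simpa using hx), ?_⟩
  have hind : ContinuousOn ((Iic z).indicator (1 : ℝ → ℝ)) {z}ᶜ := by
    rw [← piecewise_eq_indicator]
    exact continuousOn_const.piecewise (by simp) continuousOn_const
  rw [Finset.coe_singleton]
  exact ((continuous_id.mul (continuous_steinSolution z)).continuousOn.add hind).sub
    continuousOn_const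

lemma abs_steinSolution_le (z x : ℝ) : |steinSolution z x| ≤ √(2 * π) / 4 := by
  have hφ := stdPDF_pos x
  have hmin := monotone_cdf (gaussianReal 0 1) (min_le_left x z)
  have hmax := monotone_cdf (gaussianReal 0 1) (le_max_left x z)
  have hmin0 := cdf_nonneg (gaussianReal 0 1) (min x z)
  have hmax1 := cdf_le_one (gaussianReal 0 1) (max x z)
  rw [steinSolution, abs_of_nonneg (by positivity), div_le_iff₀ hφ]
  calc Φ (min x z) * (1 - Φ (max x z)) ≤ Φ x * (1 - Φ x) :=
        mul_le_mul hmin (by linarith) (by linarith) (cdf_nonneg _ x)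
    _ ≤ √(2 * π) / 4 * φ x := stdCDF_mul_one_sub_le x

lemma steinSolutionDeriv_of_le {z x : ℝ} (h : x ≤ z) :
    steinSolutionDeriv z x = (1 - Φ z) * (1 + x * Φ x / φ x) := by
  rw [steinSolutionDeriv, steinSolution, min_eq_left h, max_eq_right h,
    indicator_of_mem (mem_Iic.2 h), Pi.one_apply]
  ring

lemma steinSolutionDeriv_of_lt {z x : ℝ} (h : z < x) :
    steinSolutionDeriv z x = -(Φ z * (1 + -x * Φ (-x) / φ (-x))) := by
  rw [steinSolutionDeriv, steinSolution, min_eq_right h.le, max_eq_left h.le,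
    indicator_of_notMem (notMem_Iic.2 h), stdCDF_neg, stdPDF_neg]
  ring

lemma abs_steinSolutionDeriv_le (z x : ℝ) : |steinSolutionDeriv z x| ≤ 1 := by
  rcases le_or_gt x z with h | h
  · have hA := one_add_mul_stdCDF_div_nonneg x
    have hΦ := monotone_cdf (gaussianReal 0 1) h
    rw [steinSolutionDeriv_of_le h,
      abs_of_nonneg (mul_nonneg (sub_nonneg.2 (cdf_le_one _ z)) hA)]
    calc (1 - Φ z) * (1 + x * Φ x / φ x) ≤ (1 - Φ x) * (1 + x * Φ x / φ x) :=
          mul_le_mul_of_nonneg_right (by linarith) hA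
      _ ≤ 1 := one_sub_stdCDF_mul_le_one x
  · have hA := one_add_mul_stdCDF_div_nonneg (-x)
    have hΦ := monotone_cdf (gaussianReal 0 1) h.le
    rw [steinSolutionDeriv_of_lt h, abs_neg, abs_of_nonneg (mul_nonneg (cdf_nonneg _ z) hA)]
    calc Φ z * (1 + -x * Φ (-x) / φ (-x)) ≤ (1 - Φ (-x)) * (1 + -x * Φ (-x) / φ (-x)) :=
          mul_le_mul_of_nonneg_right (by rw [stdCDF_neg]; linarith) hA
      _ ≤ 1 := one_sub_stdCDF_mul_le_one (-x)

lemma integral_steinSolutionDeriv_sub_mul {Ω : Type*} [MeasurableSpace Ω] (P : Measure Ω)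
    [IsProbabilityMeasure P] {Y : Ω → ℝ} (hY : Measurable Y) (z : ℝ) :
    ∫ ω, (steinSolutionDeriv z (Y ω) - Y ω * steinSolution z (Y ω)) ∂P
      = P.real {ω | Y ω ≤ z} - Φ z := by
  have hs : MeasurableSet (Y ⁻¹' Iic z) := hY measurableSet_Iic
  simp_rw [steinSolutionDeriv_sub_mul, ← indicator_comp_right Y, Pi.one_comp]
  rw [integral_sub ((integrable_const 1).indicator hs) (integrable_const _),
    integral_indicator_one hs, integral_const, probReal_univ, one_smul]
  rfl

theorem kolmogorov_distance_stein_bound_general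
    {Ω : Type*} [MeasurableSpace Ω] (P : Measure Ω) [IsProbabilityMeasure P]
    (Y : Ω → ℝ) (hY : Measurable Y)
    (M : ℝ)
    (hM : ∀ f f' : ℝ → ℝ, PiecewiseC1 f f' →
      (∀ x, |f x| ≤ Real.sqrt (2 * π) / 4) → (∀ x, |f' x| ≤ 1) →
      |∫ ω, (f' (Y ω) - Y ω * f (Y ω)) ∂P| ≤ M) :
    ∀ z : ℝ,
      |(P {ω | Y ω ≤ z}).toReal - ((gaussianReal 0 1) (Set.Iic z)).toReal| ≤ M := by
  intro z
  have h := hM _ _ (piecewiseC1_steinSolution z) (abs_steinSolution_le z)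
    (abs_steinSolutionDeriv_le z)
  rwa [integral_steinSolutionDeriv_sub_mul P hY, cdf_eq_real, measureReal_def,
    measureReal_def] at h

/-- Kolmogorov distance bound: for an integrable random variable `Y` and a standard Gaussian
`Z`, `sup_z |P(Y ≤ z) − P(Z ≤ z)| ≤ sup_{f ∈ F_Kol} |E[f'(Y) − Y f(Y)]|`, where `F_Kol` is the
class of piecewise continuously differentiable functions bounded by `√(2π)/4` with derivative
bounded by `1`. -/
theorem kolmogorov_distance_stein_bound
    {Ω : Type*} [MeasurableSpace Ω] (P : Measure Ω) [IsProbabilityMeasure P]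
    (Y : Ω → ℝ) (hY : Measurable Y) (hYint : Integrable Y P)
    (M : ℝ)
    (hM : ∀ f f' : ℝ → ℝ, PiecewiseC1 f f' →
      (∀ x, |f x| ≤ Real.sqrt (2 * π) / 4) → (∀ x, |f' x| ≤ 1) →
      |∫ ω, (f' (Y ω) - Y ω * f (Y ω)) ∂P| ≤ M) :
    ∀ z : ℝ,
      |(P {ω | Y ω ≤ z}).toReal - ((gaussianReal 0 1) (Set.Iic z)).toReal| ≤ M :=
  kolmogorov_distance_stein_bound_general P Y hY M hM
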